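/- Bound on the interior-point boundary terms in the proof of Theorem 2: With the notation of the context, define Θ_{u,2} = c Σ_{j ∈ ZMod N} ( |c·φ_j(h/4)·v_j(3h/4)| + |c·φ_j(3h/4)·v_{j+1}(h/4)| ) and Θ_{v,2} = c Σ_{j ∈ ZMod N} ( |ψ_{j+1}(h/4)·c·w_j(3h/4)| + |ψ_{j+1}(3h/4)·c·w_{j+1}(h/4)| ). Then Θ_{u,2} + Θ_{v,2} ≤ (c/h) · (128/(√3·π)) · √(q_u·(q_v+1)) · (c²‖w‖² + ‖v‖²)^{1/2} · (c²‖φ‖² + ‖ψ‖²)^{1/2}. -/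

import Mathlib

open Polynomial

/-- Squared L² norm of a broken (piecewise polynomial) function on a periodic grid
of `N` elements each of width `h`, in local coordinates `s ∈ [0,h]`. -/
noncomputable def brokenNormSq (N : ℕ) [NeZero N] (h : ℝ)
    (p : ZMod N → Polynomial ℝ) : ℝ :=
  ∑ j : ZMod N, ∫ s in (0:ℝ)..h, (p j).eval s ^ 2

/-!
Substituting `x = cos θ`, the Chebyshev polynomials of the second kind turn `p(x) sin θ` into a
sine polynomial `∑_{n ≤ q} aₙ sin ((n + 1) θ)` when `deg p ≤ q`. Cauchy–Schwarz on the
coefficients and Parseval on `[0, π]` give the Markov-type estimate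
`(1 - x²) p(x)² ≤ 2 (q + 1) / π ∫_{-1}^{1} p²`, which, rescaled to an element of width `h`, bounds
a value at `h/4` or `3h/4` by `16 (q + 1) / (3 π h)` times the squared `L²` norm on that element.
Each of the four interior-point sums is a Cauchy–Schwarz pairing of such values over the elements,
and a two-term Cauchy–Schwarz inequality assembles them into the two energy norms, with the
constant `32 / (3 π) ≤ 128 / (√3 π)`.
-/

open Real Finset

namespace Polynomial.Chebyshev

theorem exists_eq_sum_smul_U {q : ℕ} {p : ℝ[X]} (hp : p.natDegree ≤ q) :
    ∃ a : ℕ → ℝ, p = ∑ n ∈ range (q + 1), a n • U ℝ n := by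
  induction q generalizing p with
  | zero =>
    refine ⟨fun _ => p.coeff 0, ?_⟩
    rw [eq_C_of_natDegree_eq_zero (Nat.le_zero.mp hp)]
    simp [smul_eq_C_mul]
  | succ q ih =>
    set b := p.coeff (q + 1) / 2 ^ (q + 1)
    have hU : (U ℝ (q + 1 : ℕ)).natDegree = q + 1 := natDegree_U_natCast ℝ (q + 1)
    have hlead : (U ℝ (q + 1 : ℕ)).coeff (q + 1) = 2 ^ (q + 1) := by
      have := leadingCoeff_U_natCast ℝ (q + 1)
      rwa [leadingCoeff, hU] at this
    obtain ⟨a, ha⟩ := ih (p := p - b • U ℝ (q + 1 : ℕ)) <| by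
      rw [natDegree_le_iff_coeff_eq_zero]
      intro k hk
      rcases (Nat.succ_le_of_lt hk).eq_or_lt with rfl | hk'
      · rw [coeff_sub, coeff_smul, hlead, smul_eq_mul, div_mul_cancel₀ _ (by positivity), sub_self]
      · rw [coeff_sub, coeff_smul, coeff_eq_zero_of_natDegree_lt (by omega),
          coeff_eq_zero_of_natDegree_lt (by omega), smul_zero, sub_zero]
    refine ⟨Function.update a (q + 1) b, ?_⟩
    rw [sum_range_succ, Function.update_self,
      sum_congr rfl fun n hn => by rw [Function.update_of_ne (by simp at hn; omega)], ← ha,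
      sub_add_cancel]

theorem exists_eval_cos_mul_sin_eq_sum {q : ℕ} {p : ℝ[X]} (hp : p.natDegree ≤ q) :
    ∃ a : ℕ → ℝ, ∀ θ : ℝ,
      p.eval (cos θ) * sin θ = ∑ n ∈ range (q + 1), a n * sin ((n + 1) * θ) := by
  obtain ⟨a, rfl⟩ := exists_eq_sum_smul_U hp
  refine ⟨a, fun θ => ?_⟩
  simp only [eval_finsetSum, eval_smul, smul_eq_mul, sum_mul, mul_assoc, U_real_cos,
    Int.cast_natCast]

end Polynomial.Chebyshev

theorem integral_cos_int_mul_eq_zero {k : ℤ} (hk : k ≠ 0) : ∫ θ in (0 : ℝ)..π, cos (k * θ) = 0 := by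
  rw [intervalIntegral.integral_comp_mul_left (fun x => cos x) (Int.cast_ne_zero.mpr hk),
    integral_cos, sin_int_mul_pi, mul_zero, sin_zero, sub_zero, smul_zero]

theorem integral_sin_mul_sin (m n : ℕ) :
    ∫ θ in (0 : ℝ)..π, sin ((m + 1) * θ) * sin ((n + 1) * θ) = if m = n then π / 2 else 0 := by
  have hprod : ∀ θ : ℝ, sin ((m + 1) * θ) * sin ((n + 1) * θ)
      = (cos (((m - n : ℤ) : ℝ) * θ) - cos (((m + n + 2 : ℤ) : ℝ) * θ)) / 2 := fun θ => by
    push_cast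
    rw [show ((m : ℝ) - n) * θ = (m + 1) * θ - (n + 1) * θ by ring,
      show ((m : ℝ) + n + 2) * θ = (m + 1) * θ + (n + 1) * θ by ring, ← two_mul_sin_mul_sin]
    ring
  have hcos : ∀ k : ℤ, IntervalIntegrable (fun θ => cos (k * θ)) MeasureTheory.volume 0 π :=
    fun k => (continuous_cos.comp (continuous_const.mul continuous_id)).intervalIntegrable _ _
  simp only [hprod]
  rw [intervalIntegral.integral_div, intervalIntegral.integral_sub (hcos _) (hcos _),
    integral_cos_int_mul_eq_zero (k := m + n + 2) (by omega)]
  split_ifs with hmn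
  · simp [hmn]
  · rw [integral_cos_int_mul_eq_zero (by omega)]; simp

theorem integral_sum_mul_sin_sq (s : Finset ℕ) (a : ℕ → ℝ) :
    ∫ θ in (0 : ℝ)..π, (∑ n ∈ s, a n * sin ((n + 1) * θ)) ^ 2 = π / 2 * ∑ n ∈ s, a n ^ 2 := by
  calc ∫ θ in (0 : ℝ)..π, (∑ n ∈ s, a n * sin ((n + 1) * θ)) ^ 2
      = ∑ m ∈ s, ∑ n ∈ s, a m * a n * ∫ θ in (0 : ℝ)..π, sin ((m + 1) * θ) * sin ((n + 1) * θ) := by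
        simp_rw [sq, sum_mul_sum]
        rw [intervalIntegral.integral_finsetSum fun m _ => by
          apply Continuous.intervalIntegrable; fun_prop]
        refine sum_congr rfl fun m _ => ?_
        rw [intervalIntegral.integral_finsetSum fun n _ => by
          apply Continuous.intervalIntegrable; fun_prop]
        refine sum_congr rfl fun n _ => ?_
        rw [← intervalIntegral.integral_const_mul]
        congr 1 with θ
        ring
    _ = π / 2 * ∑ n ∈ s, a n ^ 2 := by
        simp_rw [integral_sin_mul_sin, mul_ite, mul_zero, sum_ite_eq, mul_sum]
        exact sum_congr rfl fun n hn => by simp [hn]; ring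

theorem integral_comp_cos_mul_sin {f : ℝ → ℝ} (hf : Continuous f) :
    ∫ θ in (0 : ℝ)..π, f (cos θ) * sin θ = ∫ x in (-1 : ℝ)..1, f x := by
  have := intervalIntegral.integral_comp_mul_deriv (a := 0) (b := π)
    (fun θ _ => hasDerivAt_cos θ) continuous_sin.neg.continuousOn hf
  simp only [Function.comp_apply, mul_neg, intervalIntegral.integral_neg, cos_zero, cos_pi] at this
  rw [intervalIntegral.integral_symm (-1 : ℝ) 1] at this
  exact neg_inj.mp this

theorem one_sub_sq_mul_eval_sq_le {q : ℕ} {p : ℝ[X]} (hp : p.natDegree ≤ q) {x : ℝ}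
    (hx : x ∈ Set.Icc (-1 : ℝ) 1) :
    (1 - x ^ 2) * p.eval x ^ 2 ≤ 2 * (q + 1) / π * ∫ t in (-1 : ℝ)..1, p.eval t ^ 2 := by
  obtain ⟨a, ha⟩ := Polynomial.Chebyshev.exists_eval_cos_mul_sin_eq_sum hp
  have hcont : Continuous fun θ => p.eval (cos θ) ^ 2 * sin θ := by fun_prop
  calc (1 - x ^ 2) * p.eval x ^ 2 = (p.eval (cos (arccos x)) * sin (arccos x)) ^ 2 := by
        rw [mul_pow, sin_sq, cos_arccos hx.1 hx.2]; ring
    _ ≤ (q + 1) * ∑ n ∈ range (q + 1), a n ^ 2 := by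
        rw [ha]
        refine (sq_sum_le_card_mul_sum_sq ..).trans ?_
        rw [card_range, Nat.cast_succ]
        refine mul_le_mul_of_nonneg_left (sum_le_sum fun n _ => ?_) (by positivity)
        rw [mul_pow]
        exact mul_le_of_le_one_right (sq_nonneg _) (sin_sq_le_one _)
    _ = (q + 1) * (2 / π) * ∫ θ in (0 : ℝ)..π, (p.eval (cos θ) * sin θ) ^ 2 := by
        simp_rw [ha, integral_sum_mul_sin_sq]; field_simp
    _ ≤ (q + 1) * (2 / π) * ∫ θ in (0 : ℝ)..π, p.eval (cos θ) ^ 2 * sin θ := by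
        gcongr
        refine intervalIntegral.integral_mono_on pi_pos.le
          (by apply Continuous.intervalIntegrable; fun_prop) (hcont.intervalIntegrable _ _) ?_
        intro θ hθ
        rw [mul_pow, sq (sin θ), ← mul_assoc]
        exact mul_le_of_le_one_right (mul_nonneg (sq_nonneg _)
          (sin_nonneg_of_nonneg_of_le_pi hθ.1 hθ.2)) (sin_le_one θ)
    _ = 2 * (q + 1) / π * ∫ t in (-1 : ℝ)..1, p.eval t ^ 2 := by
        rw [integral_comp_cos_mul_sin (f := fun t => p.eval t ^ 2) (by fun_prop)]; ring

theorem sub_mul_sub_mul_eval_sq_le {q : ℕ} {p : ℝ[X]} (hp : p.natDegree ≤ q) {a b s : ℝ}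
    (hab : a < b) (hs : s ∈ Set.Icc a b) :
    (s - a) * (b - s) * p.eval s ^ 2 ≤ (q + 1) * (b - a) / π * ∫ t in a..b, p.eval t ^ 2 := by
  set r := (b - a) / 2 with hr_def
  set m := (a + b) / 2 with hm_def
  have hr : 0 < r := by linarith
  have hdeg : (p.comp (C r * X + C m)).natDegree ≤ q :=
    natDegree_comp_le.trans (by nlinarith [natDegree_linear_le (a := r) (b := m)])
  have hx : (s - m) / r ∈ Set.Icc (-1 : ℝ) 1 := by
    rw [Set.mem_Icc, le_div_iff₀ hr, div_le_iff₀ hr]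
    constructor <;> linarith [hs.1, hs.2]
  have hint : ∫ t in (-1 : ℝ)..1, (p.comp (C r * X + C m)).eval t ^ 2
      = r⁻¹ * ∫ t in a..b, p.eval t ^ 2 := by
    simp only [eval_comp, eval_add, eval_mul, eval_C, eval_X]
    rw [intervalIntegral.integral_comp_mul_add (fun t => p.eval t ^ 2) hr.ne', smul_eq_mul]
    congr 3 <;> ring
  have key := one_sub_sq_mul_eval_sq_le hdeg hx
  rw [hint, eval_comp, eval_add, eval_mul, eval_C, eval_X, eval_C,
    mul_div_cancel₀ _ hr.ne', sub_add_cancel] at key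
  calc (s - a) * (b - s) * p.eval s ^ 2 = r ^ 2 * ((1 - ((s - m) / r) ^ 2) * p.eval s ^ 2) := by
        field_simp; ring
    _ ≤ r ^ 2 * (2 * (q + 1) / π * (r⁻¹ * ∫ t in a..b, p.eval t ^ 2)) := by gcongr
    _ = (q + 1) * (b - a) / π * ∫ t in a..b, p.eval t ^ 2 := by field_simp; ring

theorem mul_add_le_sqrt_mul_sqrt {c x y u v : ℝ} (hc : 0 ≤ c) (hx : 0 ≤ x) (hy : 0 ≤ y)
    (hu : 0 ≤ u) (hv : 0 ≤ v) :
    c * (√x * √u + √v * √y) ≤ √(c ^ 2 * x + y) * √(c ^ 2 * v + u) := by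
  have hcs := Real.sum_sqrt_mul_sqrt_le univ (f := ![c ^ 2 * x, y]) (g := ![u, c ^ 2 * v])
    (fun i => by fin_cases i <;> simp <;> positivity) (fun i => by fin_cases i <;> simp <;> positivity)
  simp only [Fin.sum_univ_two, Matrix.cons_val_zero, Matrix.cons_val_one, sqrt_mul' _ hx,
    sqrt_mul' _ hv, sqrt_sq hc, add_comm u] at hcs
  linarith

section BrokenFunctions

variable {N : ℕ} [NeZero N] {h : ℝ}

theorem brokenNormSq_nonneg (hh : 0 ≤ h) (p : ZMod N → ℝ[X]) : 0 ≤ brokenNormSq N h p :=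
  sum_nonneg fun _ _ => intervalIntegral.integral_nonneg hh fun _ _ => sq_nonneg _

theorem sum_eval_sq_le_brokenNormSq {q : ℕ} {p : ZMod N → ℝ[X]} (hh : 0 < h)
    (hp : ∀ j, (p j).natDegree ≤ q) {x : ℝ} (hx : x = h / 4 ∨ x = 3 * h / 4) :
    ∑ j, (p j).eval x ^ 2 ≤ 16 * (q + 1) / (3 * π * h) * brokenNormSq N h p := by
  have hxh : x * (h - x) = 3 * h ^ 2 / 16 := by rcases hx with rfl | rfl <;> ring
  have hmem : x ∈ Set.Icc 0 h := by constructor <;> rcases hx with rfl | rfl <;> linarith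
  rw [brokenNormSq, mul_sum]
  refine sum_le_sum fun j _ => ?_
  have key := sub_mul_sub_mul_eval_sq_le (hp j) hh hmem
  rw [sub_zero, sub_zero, hxh] at key
  calc (p j).eval x ^ 2 = 16 / (3 * h ^ 2) * (3 * h ^ 2 / 16 * (p j).eval x ^ 2) := by
        field_simp
    _ ≤ 16 / (3 * h ^ 2) * ((q + 1) * h / π * ∫ t in (0 : ℝ)..h, (p j).eval t ^ 2) := by
        gcongr
    _ = _ := by field_simp

theorem sum_abs_eval_mul_eval_le {m n : ℕ} {p r : ZMod N → ℝ[X]} (hh : 0 < h)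
    (hp : ∀ j, (p j).natDegree ≤ m) (hr : ∀ j, (r j).natDegree ≤ n) (σ τ : Equiv.Perm (ZMod N))
    {x y : ℝ} (hx : x = h / 4 ∨ x = 3 * h / 4) (hy : y = h / 4 ∨ y = 3 * h / 4) :
    ∑ j, |(p (σ j)).eval x * (r (τ j)).eval y|
      ≤ 16 / (3 * π * h) * √((m + 1) * (n + 1)) * √(brokenNormSq N h p)
        * √(brokenNormSq N h r) := by
  calc ∑ j, |(p (σ j)).eval x * (r (τ j)).eval y|
      = ∑ j, |(p (σ j)).eval x| * |(r (τ j)).eval y| := by simp_rw [abs_mul]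
    _ ≤ √(∑ j, |(p (σ j)).eval x| ^ 2) * √(∑ j, |(r (τ j)).eval y| ^ 2) :=
        Real.sum_mul_le_sqrt_mul_sqrt _ _ _
    _ = √(∑ j, (p j).eval x ^ 2) * √(∑ j, (r j).eval y ^ 2) := by
        simp_rw [sq_abs, Equiv.sum_comp σ (fun j => (p j).eval x ^ 2),
          Equiv.sum_comp τ (fun j => (r j).eval y ^ 2)]
    _ ≤ √(16 * (m + 1) / (3 * π * h) * brokenNormSq N h p)
          * √(16 * (n + 1) / (3 * π * h) * brokenNormSq N h r) := by
        gcongr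
        exacts [sum_eval_sq_le_brokenNormSq hh hp hx, sum_eval_sq_le_brokenNormSq hh hr hy]
    _ = _ := by
        have hA : 0 ≤ 16 * (m + 1) / (3 * π * h) := by positivity
        have hB : 0 ≤ 16 * (n + 1) / (3 * π * h) := by positivity
        have hAB : √(16 * (m + 1) / (3 * π * h)) * √(16 * (n + 1) / (3 * π * h))
            = 16 / (3 * π * h) * √((m + 1) * (n + 1)) := by
          rw [← sqrt_mul hA, ← sqrt_sq (by positivity : 0 ≤ 16 / (3 * π * h)),
            ← sqrt_mul (sq_nonneg _)]
          congr 1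
          field_simp
        rw [sqrt_mul hA, sqrt_mul hB]
        linear_combination (√(brokenNormSq N h p) * √(brokenNormSq N h r)) * hAB

end BrokenFunctions

theorem staggered_interior_point_terms_bound
    (N : ℕ) [NeZero N] (h c : ℝ) (hh : 0 < h) (hc : 0 < c)
    (qu qv : ℕ) (hqu : 1 ≤ qu)
    (w φ v ψ : ZMod N → Polynomial ℝ)
    (hw : ∀ j, (w j).natDegree ≤ qu - 1) (hφ : ∀ j, (φ j).natDegree ≤ qu - 1)
    (hv : ∀ j, (v j).natDegree ≤ qv) (hψ : ∀ j, (ψ j).natDegree ≤ qv)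
    (Θu2 Θv2 : ℝ)
    (hΘu2 : Θu2 = c * ∑ j : ZMod N,
        (|c * (φ j).eval (h / 4) * (v j).eval (3 * h / 4)|
          + |c * (φ j).eval (3 * h / 4) * (v (j + 1)).eval (h / 4)|))
    (hΘv2 : Θv2 = c * ∑ j : ZMod N,
        (|(ψ (j + 1)).eval (h / 4) * (c * (w j).eval (3 * h / 4))|
          + |(ψ (j + 1)).eval (3 * h / 4) * (c * (w (j + 1)).eval (h / 4))|)) :
    Θu2 + Θv2 ≤
      c / h * (128 / (Real.sqrt 3 * Real.pi)) * Real.sqrt ((qu : ℝ) * ((qv : ℝ) + 1))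
        * Real.sqrt (c ^ 2 * brokenNormSq N h w + brokenNormSq N h v)
        * Real.sqrt (c ^ 2 * brokenNormSq N h φ + brokenNormSq N h ψ) := by
  have hΘ : Θu2 + Θv2 = c ^ 2 * (∑ j, |(φ j).eval (h / 4) * (v j).eval (3 * h / 4)|
      + ∑ j, |(φ j).eval (3 * h / 4) * (v (j + 1)).eval (h / 4)|
      + ∑ j, |(w j).eval (3 * h / 4) * (ψ (j + 1)).eval (h / 4)|
      + ∑ j, |(w (j + 1)).eval (h / 4) * (ψ (j + 1)).eval (3 * h / 4)|) := by
    rw [hΘu2, hΘv2, ← sum_add_distrib, ← sum_add_distrib, ← sum_add_distrib, mul_sum, mul_sum,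
      mul_sum, ← sum_add_distrib]
    refine sum_congr rfl fun j _ => ?_
    simp only [abs_mul, abs_of_pos hc]
    ring
  have hdeg : ((qu - 1 : ℕ) : ℝ) + 1 = qu := by rw [Nat.cast_sub hqu]; ring
  rw [← hdeg]
  set K := 16 / (3 * π * h) * √((((qu - 1 : ℕ) : ℝ) + 1) * (qv + 1)) with hK
  have hK_nonneg : 0 ≤ K := by positivity
  have hN : ∀ p, 0 ≤ brokenNormSq N h p := brokenNormSq_nonneg hh.le
  have hconst : 32 / (3 * π) ≤ 128 / (√3 * π) := by
    have : √3 ≤ 3 := sqrt_le_iff.mpr ⟨by norm_num, by norm_num⟩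
    gcongr
    norm_num
  calc Θu2 + Θv2
      ≤ c ^ 2 * (K * √(brokenNormSq N h φ) * √(brokenNormSq N h v)
          + K * √(brokenNormSq N h φ) * √(brokenNormSq N h v)
          + K * √(brokenNormSq N h w) * √(brokenNormSq N h ψ)
          + K * √(brokenNormSq N h w) * √(brokenNormSq N h ψ)) := by
        rw [hΘ]
        gcongr
        exacts [sum_abs_eval_mul_eval_le hh hφ hv (.refl _) (.refl _) (.inl rfl) (.inr rfl),
          sum_abs_eval_mul_eval_le hh hφ hv (.refl _) (.addRight 1) (.inr rfl) (.inl rfl),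
          sum_abs_eval_mul_eval_le hh hw hψ (.refl _) (.addRight 1) (.inr rfl) (.inl rfl),
          sum_abs_eval_mul_eval_le hh hw hψ (.addRight 1) (.addRight 1) (.inl rfl) (.inr rfl)]
    _ = c * (2 * K) * (c * (√(brokenNormSq N h φ) * √(brokenNormSq N h v)
          + √(brokenNormSq N h w) * √(brokenNormSq N h ψ))) := by ring
    _ ≤ c * (2 * K) * (√(c ^ 2 * brokenNormSq N h φ + brokenNormSq N h ψ)
          * √(c ^ 2 * brokenNormSq N h w + brokenNormSq N h v)) :=
        mul_le_mul_of_nonneg_left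
          (mul_add_le_sqrt_mul_sqrt hc.le (hN φ) (hN ψ) (hN v) (hN w)) (by positivity)
    _ ≤ _ := by
        rw [show c * (2 * K) = c / h * (32 / (3 * π)) * √((((qu - 1 : ℕ) : ℝ) + 1) * (qv + 1))
          by rw [hK]; field_simp; ring, mul_comm (√(_ + brokenNormSq N h ψ)), ← mul_assoc]
        gcongr
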